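/- arXiv:1309.4585 — 3 statements merged into one kernel-verified Lean document; each statement's English description precedes it below -/
import Mathlib

section
/- Let P_n(x) be the Eulerian polynomials defined by P_0(x)=1 and P_{n+1}(x)=(nx+1)P_n(x)+x(1−x)P_n'(x). Then for every n≥1 and 0<q<1, x>0, one has d^n/dx^n log[x]_q = −(log q)^n · q^x P_{n−1}(q^x)/(1−q^x)^n; consequently, for 0<q<1 and a≥0, d^n/dx^n ψ_q(x+a) = (log q)^{n+1} Σ_{i=0}^∞ q^{x+a+i} P_n(q^{x+a+i})/(1−q^{x+a+i})^{n+1}. -/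
open Real Set

/-- The infinite q-Pochhammer symbol `(a;q)_∞ = ∏_{k≥0} (1 - a q^k)`. -/
noncomputable def qPochInf (a q : ℝ) : ℝ := ∏' k : ℕ, (1 - a * q ^ k)

/-- Jackson's q-gamma function for `0 < q < 1`. -/
noncomputable def qGamma (q x : ℝ) : ℝ :=
  qPochInf q q / qPochInf (q ^ x) q * (1 - q) ^ (1 - x)

/-- The q-digamma function `ψ_q = (log Γ_q)'`. -/
noncomputable def qDigamma (q x : ℝ) : ℝ := deriv (fun y => Real.log (qGamma q y)) x

/-- Eulerian polynomials: `P_0 = 1`, `P_{n+1}(x) = (n x + 1) P_n(x) + x(1-x) P_n'(x)`. -/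
noncomputable def eulerPoly : ℕ → Polynomial ℝ
  | 0 => 1
  | n + 1 => (Polynomial.C (n : ℝ) * Polynomial.X + 1) * eulerPoly n
      + Polynomial.X * (1 - Polynomial.X) * Polynomial.derivative (eulerPoly n)

/-
Writing `t = q ^ z`, one has `d/dz = log q · t d/dt`, and the recursion defining the Eulerian
polynomials is exactly what makes `t P_n(t) / (1 - t)^(n+1)` satisfy
`t d/dt [t P_n(t) / (1 - t)^(n+1)] = t P_{n+1}(t) / (1 - t)^(n+2)`. Since
`d/dz log (1 - q ^ z) = -log q · q ^ z / (1 - q ^ z)`, both formulas follow by induction on `n`.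
For `ψ_q`, expanding `log Γ_q` through the product gives
`ψ_q(z) = log q · ∑ₖ q^(z+k) / (1 - q^(z+k)) - log (1 - q)`, and the series of derivatives is
dominated by a geometric series on every half-line `z > c > 0`, so it may be differentiated
termwise.
-/

open Filter Topology

theorem Set.EqOn.iteratedDeriv_succ_of_hasDerivAt {𝕜 F : Type*} [NontriviallyNormedField 𝕜]
    [NormedAddCommGroup F] [NormedSpace 𝕜 F] {s : Set 𝕜} (hs : IsOpen s) {f : 𝕜 → F}
    {G : ℕ → 𝕜 → F} (hf : ∀ x ∈ s, HasDerivAt f (G 0 x) x)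
    (hG : ∀ n, ∀ x ∈ s, HasDerivAt (G n) (G (n + 1) x) x) (n : ℕ) :
    EqOn (iteratedDeriv (n + 1) f) (G n) s := by
  induction n with
  | zero =>
    intro x hx
    rw [iteratedDeriv_one]
    exact (hf x hx).deriv
  | succ n ih =>
    intro x hx
    rw [iteratedDeriv_succ, (ih.eventuallyEq_of_mem (hs.mem_nhds hx)).deriv_eq]
    exact (hG n x hx).deriv

lemma eulerPoly_eval_zero (t : ℝ) : (eulerPoly 0).eval t = 1 := by
  simp [eulerPoly]

lemma eulerPoly_eval_succ (n : ℕ) (t : ℝ) :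
    (eulerPoly (n + 1)).eval t =
      (n * t + 1) * (eulerPoly n).eval t + t * (1 - t) * (eulerPoly n).derivative.eval t := by
  simp [eulerPoly]

noncomputable def qEulerTerm (q : ℝ) (n : ℕ) (z : ℝ) : ℝ :=
  q ^ z * (eulerPoly n).eval (q ^ z) / (1 - q ^ z) ^ (n + 1)

section

variable {q : ℝ}

lemma one_sub_rpow_pos (hq0 : 0 < q) (hq1 : q < 1) {z : ℝ} (hz : 0 < z) : 0 < 1 - q ^ z :=
  sub_pos.2 (Real.rpow_lt_one hq0.le hq1 hz)

lemma hasDerivAt_qEulerTerm (hq0 : 0 < q) (n : ℕ) {x : ℝ} (hx : 1 - q ^ x ≠ 0) :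
    HasDerivAt (qEulerTerm q n) (log q * qEulerTerm q (n + 1) x) x := by
  have hE : HasDerivAt (fun y : ℝ => q ^ y) (q ^ x * log q) x :=
    (Real.hasStrictDerivAt_const_rpow hq0 x).hasDerivAt
  have hP := ((eulerPoly n).hasDerivAt (q ^ x)).comp x hE
  have hD := ((hasDerivAt_const x (1 : ℝ)).sub hE).pow (n + 1)
  refine ((hE.mul hP).div hD (pow_ne_zero _ hx)).congr_deriv ?_
  simp only [qEulerTerm, eulerPoly_eval_succ, Pi.sub_apply, Pi.pow_apply, Pi.mul_apply,
    Function.comp_apply, Nat.cast_add, Nat.cast_one, Nat.add_sub_cancel]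
  field_simp
  ring

lemma hasDerivAt_log_one_sub_rpow_div (hq0 : 0 < q) {c x : ℝ} (hc : c ≠ 0)
    (hx : 1 - q ^ x ≠ 0) :
    HasDerivAt (fun y => log ((1 - q ^ y) / c)) (-log q * qEulerTerm q 0 x) x := by
  have hE : HasDerivAt (fun y : ℝ => q ^ y) (q ^ x * log q) x :=
    (Real.hasStrictDerivAt_const_rpow hq0 x).hasDerivAt
  refine ((((hasDerivAt_const x (1 : ℝ)).sub hE).div_const c).log
    (div_ne_zero hx hc)).congr_deriv ?_
  simp only [qEulerTerm, eulerPoly_eval_zero, Pi.sub_apply]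
  field_simp
  ring

theorem iteratedDeriv_log_qNumber (hq0 : 0 < q) (hq1 : q < 1) (n : ℕ) :
    EqOn (iteratedDeriv (n + 1) fun y => log ((1 - q ^ y) / (1 - q)))
      (fun x => -log q ^ (n + 1) * qEulerTerm q n x) (Ioi 0) := by
  refine Set.EqOn.iteratedDeriv_succ_of_hasDerivAt isOpen_Ioi
    (G := fun n x => -log q ^ (n + 1) * qEulerTerm q n x) (fun x hx => ?_)
    (fun n x hx => ?_) n
  · simpa using hasDerivAt_log_one_sub_rpow_div hq0 (sub_pos.2 hq1).ne'
      (one_sub_rpow_pos hq0 hq1 hx).ne'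
  · refine ((hasDerivAt_qEulerTerm hq0 n (one_sub_rpow_pos hq0 hq1 hx).ne').const_mul
      _).congr_deriv ?_
    ring

lemma exists_abs_qEulerTerm_add_nat_le (hq0 : 0 < q) (hq1 : q < 1) (n : ℕ) {c : ℝ}
    (hc : 0 < c) :
    ∃ C, ∀ y, c ≤ y → ∀ k : ℕ, |qEulerTerm q n (y + k)| ≤ C * q ^ k := by
  obtain ⟨B, hB⟩ := (isCompact_Icc (a := (0 : ℝ)) (b := 1)).exists_bound_of_continuousOn
    (eulerPoly n).continuous.continuousOn
  refine ⟨q ^ c * B / (1 - q ^ c) ^ (n + 1), fun y hy k => ?_⟩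
  have hyk : c ≤ y + k := le_add_of_le_of_nonneg hy k.cast_nonneg
  have ht0 : 0 < q ^ (y + k) := Real.rpow_pos_of_pos hq0 _
  have hc1 : 0 < 1 - q ^ c := one_sub_rpow_pos hq0 hq1 hc
  have htc : q ^ (y + k) ≤ q ^ c := Real.rpow_le_rpow_of_exponent_ge hq0 hq1.le hyk
  have hty : q ^ (y + k) ≤ q ^ c * q ^ k := by
    rw [Real.rpow_add_natCast hq0.ne']
    exact mul_le_mul_of_nonneg_right (Real.rpow_le_rpow_of_exponent_ge hq0 hq1.le hy)
      (by positivity)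
  have hP := hB (q ^ (y + k)) ⟨ht0.le, (htc.trans (Real.rpow_le_one hq0.le hq1.le hc.le))⟩
  rw [Real.norm_eq_abs] at hP
  have hB0 : 0 ≤ B := (abs_nonneg _).trans hP
  rw [qEulerTerm, abs_div, abs_mul, abs_of_pos ht0,
    abs_of_pos (pow_pos (one_sub_rpow_pos hq0 hq1 (hc.trans_le hyk)) _)]
  calc q ^ (y + k) * |(eulerPoly n).eval (q ^ (y + k))| / (1 - q ^ (y + k)) ^ (n + 1)
      ≤ q ^ c * q ^ k * B / (1 - q ^ c) ^ (n + 1) := by gcongr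
    _ = q ^ c * B / (1 - q ^ c) ^ (n + 1) * q ^ k := by ring

lemma summable_qEulerTerm_add_nat (hq0 : 0 < q) (hq1 : q < 1) (n : ℕ) {z : ℝ} (hz : 0 < z) :
    Summable fun k : ℕ => qEulerTerm q n (z + k) := by
  obtain ⟨C, hC⟩ := exists_abs_qEulerTerm_add_nat_le hq0 hq1 n hz
  exact .of_norm_bounded ((summable_geometric_of_lt_one hq0.le hq1).mul_left C)
    fun k => hC z le_rfl k

lemma hasDerivAt_tsum_of_hasDerivAt_qEulerTerm (hq0 : 0 < q) (hq1 : q < 1)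
    {g : ℕ → ℝ → ℝ} {m : ℕ} {c z : ℝ}
    (hg : ∀ (k : ℕ) y, 0 < y → HasDerivAt (g k) (c * qEulerTerm q m (y + k)) y)
    (hz : 0 < z) (hsum : Summable fun k => g k z) :
    HasDerivAt (fun y => ∑' k, g k y) (c * ∑' k : ℕ, qEulerTerm q m (z + k)) z := by
  obtain ⟨C, hC⟩ := exists_abs_qEulerTerm_add_nat_le hq0 hq1 m (half_pos hz)
  have hz' : z ∈ Ioi (z / 2) := half_lt_self hz
  rw [← tsum_mul_left]
  refine hasDerivAt_tsum_of_isPreconnected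
    (((summable_geometric_of_lt_one hq0.le hq1).mul_left C).mul_left |c|) isOpen_Ioi
    isPreconnected_Ioi (fun k y hy => hg k y ((half_pos hz).trans hy)) (fun k y hy => ?_)
    hz' hsum hz'
  rw [norm_mul, Real.norm_eq_abs, Real.norm_eq_abs]
  exact mul_le_mul_of_nonneg_left (hC y hy.le k) (abs_nonneg c)

lemma hasDerivAt_tsum_qEulerTerm (hq0 : 0 < q) (hq1 : q < 1) (n : ℕ) {z : ℝ} (hz : 0 < z) :
    HasDerivAt (fun y => ∑' k : ℕ, qEulerTerm q n (y + k))
      (log q * ∑' k : ℕ, qEulerTerm q (n + 1) (z + k)) z :=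
  hasDerivAt_tsum_of_hasDerivAt_qEulerTerm hq0 hq1
    (fun k y hy => (hasDerivAt_qEulerTerm hq0 n
      (one_sub_rpow_pos hq0 hq1 (by positivity)).ne').comp_add_const y k)
    hz (summable_qEulerTerm_add_nat hq0 hq1 n hz)

lemma summable_log_one_sub_rpow_add_nat (hq0 : 0 < q) (hq1 : q < 1) (z : ℝ) :
    Summable fun k : ℕ => log (1 - q ^ (z + k)) := by
  have h : Summable fun k : ℕ => -q ^ (z + k) := by
    simp only [Real.rpow_add_natCast hq0.ne']
    exact ((summable_geometric_of_lt_one hq0.le hq1).mul_left _).neg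
  simpa [← sub_eq_add_neg] using Real.summable_log_one_add_of_summable h

lemma qPochInf_rpow_eq_exp_tsum (hq0 : 0 < q) (hq1 : q < 1) {z : ℝ} (hz : 0 < z) :
    qPochInf (q ^ z) q = Real.exp (∑' k : ℕ, log (1 - q ^ (z + k))) := by
  rw [Real.rexp_tsum_eq_tprod (fun k => one_sub_rpow_pos hq0 hq1 (by positivity))
    (summable_log_one_sub_rpow_add_nat hq0 hq1 z), qPochInf]
  simp only [Real.rpow_add_natCast hq0.ne']

lemma log_qGamma (hq0 : 0 < q) (hq1 : q < 1) {y : ℝ} (hy : 0 < y) :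
    log (qGamma q y) = log (qPochInf q q) - ∑' k : ℕ, log (1 - q ^ (y + k))
      + (1 - y) * log (1 - q) := by
  have hPoch : 0 < qPochInf q q := by
    have h := qPochInf_rpow_eq_exp_tsum hq0 hq1 one_pos
    rw [Real.rpow_one] at h
    exact h ▸ Real.exp_pos _
  rw [qGamma, qPochInf_rpow_eq_exp_tsum hq0 hq1 hy, log_mul (by positivity)
      (Real.rpow_pos_of_pos (sub_pos.2 hq1) _).ne',
    log_div hPoch.ne' (Real.exp_ne_zero _), log_exp,
    log_rpow (sub_pos.2 hq1)]

lemma qDigamma_eq_tsum (hq0 : 0 < q) (hq1 : q < 1) {z : ℝ} (hz : 0 < z) :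
    qDigamma q z = log q * ∑' k : ℕ, qEulerTerm q 0 (z + k) - log (1 - q) := by
  have hlogsum : HasDerivAt (fun y : ℝ => ∑' k : ℕ, log (1 - q ^ (y + k)))
      (-log q * ∑' k : ℕ, qEulerTerm q 0 (z + k)) z :=
    hasDerivAt_tsum_of_hasDerivAt_qEulerTerm hq0 hq1
      (fun k y hy => by
        simpa using (hasDerivAt_log_one_sub_rpow_div hq0 one_ne_zero
          (one_sub_rpow_pos hq0 hq1 (by positivity)).ne').comp_add_const y k)
      hz (summable_log_one_sub_rpow_add_nat hq0 hq1 z)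
  have hEq : (fun y => log (qGamma q y)) =ᶠ[𝓝 z] fun y : ℝ => log (qPochInf q q)
      - ∑' k : ℕ, log (1 - q ^ (y + k)) + (1 - y) * log (1 - q) :=
    eventually_of_mem (isOpen_Ioi.mem_nhds hz) fun y hy => log_qGamma hq0 hq1 hy
  refine ((((hasDerivAt_const z _).sub hlogsum).add (((hasDerivAt_id z).const_sub 1).mul_const
    _)).congr_of_eventuallyEq hEq).deriv.trans ?_
  ring

theorem iteratedDeriv_qDigamma (hq0 : 0 < q) (hq1 : q < 1) (n : ℕ) :
    EqOn (iteratedDeriv (n + 1) (qDigamma q))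
      (fun z => log q ^ (n + 2) * ∑' k : ℕ, qEulerTerm q (n + 1) (z + k)) (Ioi 0) := by
  refine Set.EqOn.iteratedDeriv_succ_of_hasDerivAt isOpen_Ioi
    (G := fun n z => log q ^ (n + 2) * ∑' k : ℕ, qEulerTerm q (n + 1) (z + k))
    (fun z hz => ?_) (fun n z hz => ?_) n
  · have hEq : qDigamma q =ᶠ[𝓝 z]
        fun y => log q * ∑' k : ℕ, qEulerTerm q 0 (y + k) - log (1 - q) :=
      eventually_of_mem (isOpen_Ioi.mem_nhds hz) fun y hy => qDigamma_eq_tsum hq0 hq1 hy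
    refine (((hasDerivAt_tsum_qEulerTerm hq0 hq1 0 hz).const_mul _).sub_const
      _).congr_of_eventuallyEq hEq |>.congr_deriv ?_
    ring
  · refine ((hasDerivAt_tsum_qEulerTerm hq0 hq1 (n + 1) hz).const_mul _).congr_deriv ?_
    ring

end

theorem stmt1 (q : ℝ) (hq0 : 0 < q) (hq1 : q < 1) :
    (∀ n : ℕ, 1 ≤ n → ∀ x : ℝ, 0 < x →
      iteratedDeriv n (fun y => Real.log ((1 - q ^ y) / (1 - q))) x =
        -(Real.log q ^ n) * (q ^ x * (eulerPoly (n - 1)).eval (q ^ x) / (1 - q ^ x) ^ n)) ∧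
    (∀ n : ℕ, 1 ≤ n → ∀ a : ℝ, 0 ≤ a → ∀ x : ℝ, 0 < x →
      iteratedDeriv n (fun y => qDigamma q (y + a)) x =
        Real.log q ^ (n + 1) *
          ∑' i : ℕ, q ^ (x + a + (i : ℝ)) * (eulerPoly n).eval (q ^ (x + a + (i : ℝ))) /
            (1 - q ^ (x + a + (i : ℝ))) ^ (n + 1)) := by
  constructor
  · intro n hn x hx
    obtain ⟨m, rfl⟩ : ∃ m, n = m + 1 := ⟨n - 1, by omega⟩
    simpa [qEulerTerm] using iteratedDeriv_log_qNumber hq0 hq1 m hx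
  · intro n hn a ha x hx
    obtain ⟨m, rfl⟩ : ∃ m, n = m + 1 := ⟨n - 1, by omega⟩
    rw [iteratedDeriv_comp_add_const]
    simpa [qEulerTerm] using iteratedDeriv_qDigamma hq0 hq1 m (show 0 < x + a by positivity)
end

section
/- Let 0<q<1, k ∈ ℝ, a_1,…,a_r, b_1,…,b_s ≥ 0, and let f be a positive function on (0,∞) satisfying: (i) f(x+1) = ( [x+a_1]_q ⋯ [x+a_r]_q / ([x+b_1]_q ⋯ [x+b_s]_q) )^k f(x) for all x>0; (ii) (1−q)^{k(r−s)x} f(x) is monotone for x>M for some constant M>0; (iii) f(1)=1. Then for all x>0, f(x) = ( ∏_{i=1}^r Γ_q(x+a_i)/Γ_q(1+a_i) · ∏_{j=1}^s Γ_q(1+b_j)/Γ_q(x+b_j) )^k. -/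
/-!
Let `G` be the right-hand side. It satisfies the same functional equation as `f` and `G 1 = 1`,
so `φ = f / G` is `1`-periodic on `(0, ∞)` with `φ 1 = 1`. Since
`(1 - q) ^ (x - 1) Γ_q(x) = (q;q)_∞ / (q^x;q)_∞ → (q;q)_∞`, the function
`Ψ x = (1 - q) ^ (k (r - s) x) G x` tends to a positive limit `L`. Comparing the monotone function
`(1 - q) ^ (k (r - s) x) f x = φ x Ψ x` at `1 + n ≤ x + 1 + n ≤ 1 + m + n`, where `x ≤ m`,
gives `φ 1 L ≤ φ x L ≤ φ 1 L` in the limit `n → ∞`.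
-/

open Real Set Filter Topology

noncomputable def qBracket (q x : ℝ) : ℝ := (1 - q ^ x) / (1 - q)

theorem apply_eq_apply_one_of_monotoneOn_mul {φ Ψ : ℝ → ℝ} {M L : ℝ}
    (hφ : ∀ x > 0, φ (x + 1) = φ x) (hΨ : Tendsto Ψ atTop (𝓝 L)) (hL : 0 < L)
    (hmono : MonotoneOn (fun x => φ x * Ψ x) (Ioi M)) {x : ℝ} (hx : 0 < x) : φ x = φ 1 := by
  have hper : ∀ y > 0, ∀ n : ℕ, φ (y + n) = φ y := by
    intro y hy n
    induction n with
    | zero => simp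
    | succ n ih =>
      rw [Nat.cast_succ, ← add_assoc, hφ _ (by positivity), ih]
  have hlim : ∀ y > 0,
      Tendsto (fun n : ℕ => φ (y + n) * Ψ (y + n)) atTop (𝓝 (φ y * L)) := by
    intro y hy
    refine ((hΨ.comp (tendsto_atTop_add_const_left _ y tendsto_natCast_atTop_atTop)).const_mul
      (φ y)).congr fun n => ?_
    rw [Function.comp_apply, hper y hy n]
  have hlarge : ∀ᶠ n : ℕ in atTop, M < 1 + n := by
    filter_upwards [(tendsto_atTop_add_const_left _ 1
      tendsto_natCast_atTop_atTop).eventually_gt_atTop M] with n hn using hn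
  obtain ⟨m, hxm⟩ := exists_nat_ge x
  have hlow : φ 1 * L ≤ φ (x + 1) * L := by
    refine le_of_tendsto_of_tendsto (hlim 1 one_pos) (hlim (x + 1) (by linarith)) ?_
    filter_upwards [hlarge] with n hn
    exact hmono hn (by simp only [mem_Ioi]; linarith) (by linarith)
  have hup : φ (x + 1) * L ≤ φ (1 + m) * L := by
    refine le_of_tendsto_of_tendsto (hlim (x + 1) (by linarith)) (hlim (1 + m) (by positivity)) ?_
    filter_upwards [hlarge] with n hn
    exact hmono (by simp only [mem_Ioi]; linarith) (by simp only [mem_Ioi]; linarith)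
      (by linarith)
  rw [hper 1 one_pos] at hup
  rw [← hφ x hx]
  exact mul_right_cancel₀ hL.ne' (le_antisymm hup hlow)

theorem apply_eq_apply_one_of_monotoneOn_or_antitoneOn_mul {φ Ψ : ℝ → ℝ} {M L : ℝ}
    (hφ : ∀ x > 0, φ (x + 1) = φ x) (hΨ : Tendsto Ψ atTop (𝓝 L)) (hL : 0 < L)
    (hmono : MonotoneOn (fun x => φ x * Ψ x) (Ioi M) ∨
      AntitoneOn (fun x => φ x * Ψ x) (Ioi M))
    {x : ℝ} (hx : 0 < x) : φ x = φ 1 := by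
  rcases hmono with hmono | hanti
  · exact apply_eq_apply_one_of_monotoneOn_mul hφ hΨ hL hmono hx
  · have hneg := apply_eq_apply_one_of_monotoneOn_mul (φ := fun x => -φ x)
      (fun y hy => by rw [hφ y hy]) hΨ hL (by simpa only [neg_mul] using hanti.neg) hx
    exact neg_inj.1 hneg

section qPochInf

variable {q : ℝ}

theorem summable_mul_pow (hq0 : 0 ≤ q) (hq1 : q < 1) (a : ℝ) :
    Summable fun n : ℕ => a * q ^ n :=
  (summable_geometric_of_lt_one hq0 hq1).mul_left a

theorem multipliable_one_sub_mul_pow (hq0 : 0 ≤ q) (hq1 : q < 1) (a : ℝ) :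
    Multipliable fun n : ℕ => 1 - a * q ^ n := by
  simpa only [sub_eq_add_neg] using
    Real.multipliable_one_add_of_summable (summable_mul_pow hq0 hq1 a).neg

theorem qPochInf_pos (hq0 : 0 ≤ q) (hq1 : q < 1) {a : ℝ} (ha : a < 1) : 0 < qPochInf a q := by
  have hterm (n : ℕ) : 0 < 1 - a * q ^ n := by
    have hqn : q ^ n ≤ 1 := pow_le_one₀ hq0 hq1.le
    rcases le_total 0 a with h | h
    · nlinarith [mul_le_of_le_one_right h hqn]
    · nlinarith [mul_nonpos_of_nonpos_of_nonneg h (pow_nonneg hq0 n)]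
  have hlog : Summable fun n : ℕ => log (1 - a * q ^ n) := by
    simpa only [sub_eq_add_neg] using
      Real.summable_log_one_add_of_summable (summable_mul_pow hq0 hq1 a).neg
  rw [qPochInf, ← Real.rexp_tsum_eq_tprod hterm hlog]
  exact exp_pos _

theorem qPochInf_rpow_pos (hq0 : 0 < q) (hq1 : q < 1) {x : ℝ} (hx : 0 < x) :
    0 < qPochInf (q ^ x) q :=
  qPochInf_pos hq0.le hq1 (rpow_lt_one hq0.le hq1 hx)

theorem qPochInf_eq_one_sub_mul (hq0 : 0 ≤ q) (hq1 : q < 1) (a : ℝ) :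
    qPochInf a q = (1 - a) * qPochInf (a * q) q := by
  have hshift : (fun n : ℕ => 1 - a * q ^ (n + 1)) = fun n => 1 - a * q * q ^ n := by
    funext n
    ring
  have hmul : Multipliable fun n : ℕ => 1 - a * q ^ (n + 1) := by
    rw [hshift]
    exact multipliable_one_sub_mul_pow hq0 hq1 (a * q)
  unfold qPochInf
  rw [tprod_eq_zero_mul' (f := fun n : ℕ => 1 - a * q ^ n) hmul, hshift, pow_zero, mul_one]

theorem continuous_qPochInf (hq0 : 0 ≤ q) (hq1 : q < 1) : Continuous fun a => qPochInf a q := by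
  refine continuous_iff_continuousAt.2 fun a₀ => ?_
  have h := tendsto_tprod_one_add_of_dominated_convergence (𝓕 := 𝓝 a₀)
    (f := fun a n => -(a * q ^ n)) (g := fun n => -(a₀ * q ^ n))
    (summable_mul_pow hq0 hq1 (|a₀| + 1))
    (fun n => ((continuous_id.mul continuous_const).neg).tendsto a₀) ?_
  · simpa only [ContinuousAt, qPochInf, sub_eq_add_neg] using h
  filter_upwards [Metric.ball_mem_nhds a₀ one_pos] with a ha n
  rw [norm_neg, norm_mul, norm_pow, Real.norm_of_nonneg hq0]
  gcongr
  have := abs_sub_abs_le_abs_sub a a₀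
  rw [Metric.mem_ball, Real.dist_eq] at ha
  rw [Real.norm_eq_abs]
  linarith

theorem qPochInf_zero (q : ℝ) : qPochInf 0 q = 1 := by
  simp [qPochInf]

theorem tendsto_qPochInf_rpow_atTop (hq0 : 0 < q) (hq1 : q < 1) :
    Tendsto (fun y : ℝ => qPochInf (q ^ y) q) atTop (𝓝 1) := by
  have h := (continuous_qPochInf hq0.le hq1).tendsto 0
  rw [qPochInf_zero] at h
  exact h.comp (tendsto_rpow_atTop_of_base_lt_one q (by linarith) hq1)

end qPochInf

section qGamma

variable {q : ℝ}

theorem qGamma_pos (hq0 : 0 < q) (hq1 : q < 1) {x : ℝ} (hx : 0 < x) : 0 < qGamma q x := by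
  have := qPochInf_pos hq0.le hq1 hq1
  have := qPochInf_rpow_pos hq0 hq1 hx
  have : 0 < (1 - q) ^ (1 - x) := rpow_pos_of_pos (by linarith) _
  unfold qGamma
  positivity

theorem qBracket_pos (hq0 : 0 < q) (hq1 : q < 1) {x : ℝ} (hx : 0 < x) : 0 < qBracket q x :=
  div_pos (by linarith [rpow_lt_one hq0.le hq1 hx]) (by linarith)

theorem qGamma_add_one (hq0 : 0 < q) (hq1 : q < 1) {x : ℝ} (hx : 0 < x) :
    qGamma q (x + 1) = qBracket q x * qGamma q x := by
  have hE : 0 < 1 - q := by linarith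
  have hshift : qPochInf (q ^ x) q = (1 - q ^ x) * qPochInf (q ^ (x + 1)) q := by
    rw [qPochInf_eq_one_sub_mul hq0.le hq1, rpow_add_one hq0.ne']
  have hpow : (1 - q) ^ (1 - x) = (1 - q) * (1 - q) ^ (1 - (x + 1)) := by
    rw [show 1 - x = 1 + (1 - (x + 1)) by ring, rpow_add hE, rpow_one]
  have := qPochInf_rpow_pos hq0 hq1 (by linarith : 0 < x + 1)
  have : 1 - q ^ x ≠ 0 := (sub_pos.2 (rpow_lt_one hq0.le hq1 hx)).ne'
  unfold qGamma qBracket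
  rw [hshift, hpow]
  field_simp

theorem qGamma_div_qGamma (hq0 : 0 < q) (hq1 : q < 1) (y : ℝ) {z : ℝ} (hz : 0 < z) :
    qGamma q y / qGamma q z = qPochInf (q ^ z) q / qPochInf (q ^ y) q * (1 - q) ^ (z - y) := by
  have hE : 0 < 1 - q := by linarith
  have hpow : (1 - q) ^ (1 - y) = (1 - q) ^ (z - y) * (1 - q) ^ (1 - z) := by
    rw [← rpow_add hE]
    ring_nf
  have := qPochInf_pos hq0.le hq1 hq1
  have := qPochInf_rpow_pos hq0 hq1 hz
  have : 0 < (1 - q) ^ (1 - z) := rpow_pos_of_pos hE _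
  unfold qGamma
  rw [hpow]
  field_simp

theorem tendsto_qGamma_add_div_mul_rpow (hq0 : 0 < q) (hq1 : q < 1) {c : ℝ} (hc : -1 < c) :
    Tendsto (fun x => qGamma q (x + c) / qGamma q (1 + c) * (1 - q) ^ x) atTop
      (𝓝 (qPochInf (q ^ (1 + c)) q * (1 - q))) := by
  have hE : 0 < 1 - q := by linarith
  have hden : Tendsto (fun x => qPochInf (q ^ (x + c)) q) atTop (𝓝 1) :=
    (tendsto_qPochInf_rpow_atTop hq0 hq1).comp (tendsto_atTop_add_const_right _ c tendsto_id)
  have hlim := ((tendsto_const_nhds (x := qPochInf (q ^ (1 + c)) q)).div hden one_ne_zero).mul_const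
    (1 - q)
  rw [div_one] at hlim
  refine hlim.congr fun x => ?_
  rw [Pi.div_apply, qGamma_div_qGamma hq0 hq1 _ (by linarith), mul_assoc, ← rpow_add hE,
    show 1 + c - (x + c) + x = 1 by ring, rpow_one]

end qGamma

noncomputable def qGammaProd (q : ℝ) {m : ℕ} (c : Fin m → ℝ) (x : ℝ) : ℝ :=
  ∏ i, qGamma q (x + c i) / qGamma q (1 + c i)

section qGammaProd

variable {q : ℝ} {m : ℕ} {c : Fin m → ℝ}

theorem inv_qGammaProd (q : ℝ) (c : Fin m → ℝ) (x : ℝ) :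
    (qGammaProd q c x)⁻¹ = ∏ i, qGamma q (1 + c i) / qGamma q (x + c i) := by
  simp only [qGammaProd, ← Finset.prod_inv_distrib, inv_div]

theorem prod_qBracket_pos (hq0 : 0 < q) (hq1 : q < 1) (hc : ∀ i, 0 ≤ c i) {x : ℝ}
    (hx : 0 < x) :
    0 < ∏ i, qBracket q (x + c i) :=
  Finset.prod_pos fun i _ => qBracket_pos hq0 hq1 (by linarith [hc i])

theorem qGammaProd_pos (hq0 : 0 < q) (hq1 : q < 1) (hc : ∀ i, 0 ≤ c i) {x : ℝ} (hx : 0 < x) :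
    0 < qGammaProd q c x :=
  Finset.prod_pos fun i _ => div_pos (qGamma_pos hq0 hq1 (by linarith [hc i]))
    (qGamma_pos hq0 hq1 (by linarith [hc i]))

theorem qGammaProd_one (hq0 : 0 < q) (hq1 : q < 1) (hc : ∀ i, -1 < c i) :
    qGammaProd q c 1 = 1 :=
  Finset.prod_eq_one fun i _ => div_self (qGamma_pos hq0 hq1 (by linarith [hc i])).ne'

theorem qGammaProd_add_one (hq0 : 0 < q) (hq1 : q < 1) (hc : ∀ i, 0 ≤ c i) {x : ℝ}
    (hx : 0 < x) :
    qGammaProd q c (x + 1) = (∏ i, qBracket q (x + c i)) * qGammaProd q c x := by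
  rw [qGammaProd, qGammaProd, ← Finset.prod_mul_distrib]
  refine Finset.prod_congr rfl fun i _ => ?_
  rw [add_right_comm, qGamma_add_one hq0 hq1 (by linarith [hc i]), mul_div_assoc]

theorem tendsto_qGammaProd_mul_pow (hq0 : 0 < q) (hq1 : q < 1) (hc : ∀ i, -1 < c i) :
    Tendsto (fun x => qGammaProd q c x * ((1 - q) ^ x) ^ m) atTop
      (𝓝 (∏ i, qPochInf (q ^ (1 + c i)) q * (1 - q))) := by
  refine (tendsto_finsetProd Finset.univ fun i _ =>
    tendsto_qGamma_add_div_mul_rpow hq0 hq1 (hc i)).congr fun x => ?_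
  rw [Finset.prod_mul_distrib, Finset.prod_const, Finset.card_univ, Fintype.card_fin, qGammaProd]

end qGammaProd

noncomputable def qGammaQuot (q k : ℝ) {r s : ℕ} (a : Fin r → ℝ) (b : Fin s → ℝ) (x : ℝ) : ℝ :=
  (qGammaProd q a x / qGammaProd q b x) ^ k

section qGammaQuot

variable {q : ℝ} {r s : ℕ} {a : Fin r → ℝ} {b : Fin s → ℝ}

theorem qGammaQuot_pos (hq0 : 0 < q) (hq1 : q < 1) (k : ℝ) (ha : ∀ i, 0 ≤ a i)
    (hb : ∀ j, 0 ≤ b j) {x : ℝ} (hx : 0 < x) : 0 < qGammaQuot q k a b x :=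
  rpow_pos_of_pos (div_pos (qGammaProd_pos hq0 hq1 ha hx) (qGammaProd_pos hq0 hq1 hb hx)) k

theorem qGammaQuot_one (hq0 : 0 < q) (hq1 : q < 1) (k : ℝ) (ha : ∀ i, -1 < a i)
    (hb : ∀ j, -1 < b j) : qGammaQuot q k a b 1 = 1 := by
  rw [qGammaQuot, qGammaProd_one hq0 hq1 ha, qGammaProd_one hq0 hq1 hb, div_one, one_rpow]

theorem qGammaQuot_add_one (hq0 : 0 < q) (hq1 : q < 1) (k : ℝ) (ha : ∀ i, 0 ≤ a i)
    (hb : ∀ j, 0 ≤ b j) {x : ℝ} (hx : 0 < x) :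
    qGammaQuot q k a b (x + 1) =
      ((∏ i, qBracket q (x + a i)) / ∏ j, qBracket q (x + b j)) ^ k * qGammaQuot q k a b x := by
  rw [qGammaQuot, qGammaQuot, ← mul_rpow
      (div_pos (prod_qBracket_pos hq0 hq1 ha hx) (prod_qBracket_pos hq0 hq1 hb hx)).le
      (div_pos (qGammaProd_pos hq0 hq1 ha hx) (qGammaProd_pos hq0 hq1 hb hx)).le,
    qGammaProd_add_one hq0 hq1 ha hx, qGammaProd_add_one hq0 hq1 hb hx, mul_div_mul_comm]

theorem exists_tendsto_rpow_mul_qGammaQuot (hq0 : 0 < q) (hq1 : q < 1) (k : ℝ)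
    (ha : ∀ i, 0 ≤ a i) (hb : ∀ j, 0 ≤ b j) :
    ∃ L > 0, Tendsto (fun x => (1 - q) ^ (k * ((r : ℝ) - s) * x) * qGammaQuot q k a b x) atTop
      (𝓝 L) := by
  have hE : 0 < 1 - q := by linarith
  have hLa : 0 < ∏ i, qPochInf (q ^ (1 + a i)) q * (1 - q) :=
    Finset.prod_pos fun i _ => mul_pos (qPochInf_rpow_pos hq0 hq1 (by linarith [ha i])) hE
  have hLb : 0 < ∏ j, qPochInf (q ^ (1 + b j)) q * (1 - q) :=
    Finset.prod_pos fun j _ => mul_pos (qPochInf_rpow_pos hq0 hq1 (by linarith [hb j])) hE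
  refine ⟨_, rpow_pos_of_pos (div_pos hLa hLb) k, ?_⟩
  refine (((tendsto_qGammaProd_mul_pow hq0 hq1 fun i => by linarith [ha i]).div
    (tendsto_qGammaProd_mul_pow hq0 hq1 fun j => by linarith [hb j]) hLb.ne').rpow_const
    (Or.inl (div_pos hLa hLb).ne')).congr' ?_
  filter_upwards [eventually_gt_atTop 0] with x hx
  have hEx : 0 < (1 - q) ^ x := rpow_pos_of_pos hE x
  have hPa := qGammaProd_pos hq0 hq1 ha hx
  have hPb := qGammaProd_pos hq0 hq1 hb hx
  have hexp :
      (1 - q) ^ (k * ((r : ℝ) - s) * x) = (((1 - q) ^ x) ^ r / ((1 - q) ^ x) ^ s) ^ k := by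
    rw [show k * ((r : ℝ) - s) * x = x * ((r : ℝ) - s) * k by ring, rpow_mul hE.le,
      rpow_mul hE.le, rpow_sub hEx, rpow_natCast, rpow_natCast]
  rw [qGammaQuot, hexp, ← mul_rpow (by positivity) (div_pos hPa hPb).le, Pi.div_apply]
  congr 1
  field_simp

end qGammaQuot

theorem stmt6_general (q : ℝ) (hq0 : 0 < q) (hq1 : q < 1) (k : ℝ) (r s : ℕ)
    (a : Fin r → ℝ) (b : Fin s → ℝ) (ha : ∀ i, 0 ≤ a i) (hb : ∀ j, 0 ≤ b j)
    (f : ℝ → ℝ)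
    (hfe : ∀ x > 0, f (x + 1) =
      ((∏ i, qBracket q (x + a i)) / ∏ j, qBracket q (x + b j)) ^ k * f x)
    (M : ℝ) (hM : 0 < M)
    (hmono : MonotoneOn (fun x => (1 - q) ^ (k * ((r : ℝ) - (s : ℝ)) * x) * f x) (Ioi M) ∨
             AntitoneOn (fun x => (1 - q) ^ (k * ((r : ℝ) - (s : ℝ)) * x) * f x) (Ioi M))
    (hf1 : f 1 = 1) :
    ∀ x > 0, f x =
      ((∏ i, qGamma q (x + a i) / qGamma q (1 + a i)) *
       ∏ j, qGamma q (1 + b j) / qGamma q (x + b j)) ^ k := by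
  have hper : ∀ x > 0, f (x + 1) / qGammaQuot q k a b (x + 1) = f x / qGammaQuot q k a b x := by
    intro x hx
    rw [hfe x hx, qGammaQuot_add_one hq0 hq1 k ha hb hx, mul_div_mul_left _ _ (rpow_pos_of_pos
      (div_pos (prod_qBracket_pos hq0 hq1 ha hx) (prod_qBracket_pos hq0 hq1 hb hx)) k).ne']
  obtain ⟨L, hL, hΨ⟩ := exists_tendsto_rpow_mul_qGammaQuot hq0 hq1 k ha hb
  have hfactor : EqOn (fun x => (1 - q) ^ (k * ((r : ℝ) - s) * x) * f x)
      (fun x => f x / qGammaQuot q k a b x *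
        ((1 - q) ^ (k * ((r : ℝ) - s) * x) * qGammaQuot q k a b x)) (Ioi M) := fun x hx => by
    field_simp [(qGammaQuot_pos hq0 hq1 k ha hb (hM.trans hx)).ne']
  intro x hx
  have hfG := apply_eq_apply_one_of_monotoneOn_or_antitoneOn_mul hper hΨ hL
    (hmono.imp (·.congr hfactor) (·.congr hfactor)) hx
  rw [hf1, qGammaQuot_one hq0 hq1 k (fun i => by linarith [ha i]) (fun j => by linarith [hb j]),
    div_one, div_eq_one_iff_eq (qGammaQuot_pos hq0 hq1 k ha hb hx).ne'] at hfG
  rw [hfG, qGammaQuot, div_eq_mul_inv, inv_qGammaProd, qGammaProd]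

theorem stmt6 (q : ℝ) (hq0 : 0 < q) (hq1 : q < 1) (k : ℝ) (r s : ℕ)
    (a : Fin r → ℝ) (b : Fin s → ℝ) (ha : ∀ i, 0 ≤ a i) (hb : ∀ j, 0 ≤ b j)
    (f : ℝ → ℝ) (hpos : ∀ x > 0, 0 < f x)
    (hfe : ∀ x > 0, f (x + 1) =
      ((∏ i, qBracket q (x + a i)) / ∏ j, qBracket q (x + b j)) ^ k * f x)
    (M : ℝ) (hM : 0 < M)
    (hmono : MonotoneOn (fun x => (1 - q) ^ (k * ((r : ℝ) - (s : ℝ)) * x) * f x) (Ioi M) ∨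
             AntitoneOn (fun x => (1 - q) ^ (k * ((r : ℝ) - (s : ℝ)) * x) * f x) (Ioi M))
    (hf1 : f 1 = 1) :
    ∀ x > 0, f x =
      ((∏ i, qGamma q (x + a i) / qGamma q (1 + a i)) *
       ∏ j, qGamma q (1 + b j) / qGamma q (x + b j)) ^ k :=
  stmt6_general q hq0 hq1 k r s a b ha hb f hfe M hM hmono hf1
end

section
/- For 0<q<1, the function G_q(x) := Γ_{q²}(x/2) / ( √([2]_q) · Γ_{q²}((x+1)/2) ) is strictly decreasing and logarithmically convex on (0,∞). -/
/-!
Put `c = q²`. Unfolding the definitions, `G_q(x) = √(1 - q) · (q^x q; c)_∞ / (q^x; c)_∞`, and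
expanding every `log (1 - q^x q c^k) - log (1 - q^x c^k)` as a power series in `q^x c^k` gives
`log G_q(x) = log √(1 - q) + ∑_{k,n} (1 - q^(n+1)) / (n + 1) · c^(k(n+1)) · (q^(n+1))^x`.
This is a convergent series of positive multiples of the strictly decreasing convex functions
`x ↦ (q^(n+1))^x`, so it is strictly decreasing and convex.
-/

open Real Set

/-- `G_q(x) = Γ_{q²}(x/2) / (√([2]_q) Γ_{q²}((x+1)/2))`, where `[2]_q = 1 + q`. -/
noncomputable def qG (q x : ℝ) : ℝ :=
  qGamma (q ^ 2) (x / 2) / (Real.sqrt (1 + q) * qGamma (q ^ 2) ((x + 1) / 2))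

section TsumOfFunctions

variable {ι : Type*} {s : Set ℝ} {f : ι → ℝ → ℝ}

lemma convexOn_tsum (hs : Convex ℝ s) (hf : ∀ i, ConvexOn ℝ s (f i))
    (hsum : ∀ x ∈ s, Summable fun i => f i x) : ConvexOn ℝ s fun x => ∑' i, f i x := by
  refine ⟨hs, fun x hx y hy a b ha hb hab => ?_⟩
  calc ∑' i, f i (a • x + b • y)
      ≤ ∑' i, (a • f i x + b • f i y) :=
        Summable.tsum_le_tsum (fun i => (hf i).2 hx hy ha hb hab) (hsum _ (hs hx hy ha hb hab))
          (((hsum x hx).mul_left a).add ((hsum y hy).mul_left b))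
    _ = a • ∑' i, f i x + b • ∑' i, f i y := by
        simp only [smul_eq_mul]
        rw [((hsum x hx).mul_left a).tsum_add ((hsum y hy).mul_left b), tsum_mul_left,
          tsum_mul_left]

lemma strictAntiOn_tsum (hf : ∀ i, AntitoneOn (f i) s) (i₀ : ι) (hi₀ : StrictAntiOn (f i₀) s)
    (hsum : ∀ x ∈ s, Summable fun i => f i x) : StrictAntiOn (fun x => ∑' i, f i x) s :=
  fun _ hx _ hy hxy => Summable.tsum_lt_tsum (fun i => hf i hx hy hxy.le) (hi₀ hx hy hxy)
    (hsum _ hy) (hsum _ hx)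

end TsumOfFunctions

section QPochhammer

variable {a c : ℝ}

lemma summable_log_one_sub_mul_pow (hc : |c| < 1) :
    Summable fun k : ℕ => log (1 - a * c ^ k) := by
  simpa only [← sub_eq_add_neg] using
    Real.summable_log_one_add_of_summable ((summable_geometric_of_abs_lt_one hc).mul_left a).neg

lemma qPochInf_eq_exp_tsum_log (ha : |a| < 1) (hc : |c| < 1) :
    qPochInf a c = exp (∑' k : ℕ, log (1 - a * c ^ k)) := by
  have hpos (k : ℕ) : 0 < 1 - a * c ^ k := by
    have : |a * c ^ k| ≤ |a| := by
      rw [abs_mul, abs_pow]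
      exact mul_le_of_le_one_right (abs_nonneg a) (pow_le_one₀ (abs_nonneg c) hc.le)
    linarith [le_abs_self (a * c ^ k)]
  exact (Real.rexp_tsum_eq_tprod hpos (summable_log_one_sub_mul_pow hc)).symm

lemma qPochInf_pos_s11 (ha : |a| < 1) (hc : |c| < 1) : 0 < qPochInf a c := by
  rw [qPochInf_eq_exp_tsum_log ha hc]
  exact exp_pos _

end QPochhammer

lemma hasSum_log_one_sub_mul_sub_log_one_sub {u b : ℝ} (hu : |u| < 1) (hub : |u * b| < 1) :
    HasSum (fun n : ℕ => (1 - b ^ (n + 1)) / (n + 1) * u ^ (n + 1))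
      (log (1 - u * b) - log (1 - u)) := by
  rw [show log (1 - u * b) - log (1 - u) = -log (1 - u) - -log (1 - u * b) by ring]
  exact ((hasSum_pow_div_log_of_abs_lt_one hu).sub
    (hasSum_pow_div_log_of_abs_lt_one hub)).congr_fun fun n => by ring

/-- Term `(k, n)` of the double series of `log ((a b; c)_∞ / (a; c)_∞)`. -/
noncomputable def qPochRatioTerm (a b c : ℝ) (p : ℕ × ℕ) : ℝ :=
  (1 - b ^ (p.2 + 1)) / (p.2 + 1) * (a * c ^ p.1) ^ (p.2 + 1)

section QPochRatio

variable {a b c q : ℝ}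

lemma summable_qPochRatioTerm (ha0 : 0 ≤ a) (ha1 : a < 1) (hb0 : 0 ≤ b) (hb1 : b ≤ 1)
    (hc0 : 0 ≤ c) (hc1 : c < 1) : Summable (qPochRatioTerm a b c) := by
  have hcoeff (n : ℕ) : 0 ≤ (1 - b ^ (n + 1)) / (n + 1) ∧ (1 - b ^ (n + 1)) / (n + 1) ≤ 1 := by
    have := pow_le_one₀ hb0 hb1 (n := n + 1)
    have := pow_nonneg hb0 (n + 1)
    constructor
    · positivity
    · rw [div_le_one (by positivity)]; linarith [(n.cast_nonneg : (0 : ℝ) ≤ n)]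
  refine Summable.of_nonneg_of_le (fun p => mul_nonneg (hcoeff p.2).1 (by positivity))
    (fun p => ?_) ((summable_geometric_of_lt_one hc0 hc1).mul_of_nonneg
      ((summable_geometric_of_lt_one ha0 ha1).mul_left a) (fun k => by positivity)
      (fun n => by positivity))
  calc qPochRatioTerm a b c p ≤ (a * c ^ p.1) ^ (p.2 + 1) :=
        mul_le_of_le_one_left (by positivity) (hcoeff p.2).2
    _ = (c ^ p.1) ^ (p.2 + 1) * a ^ (p.2 + 1) := by ring
    _ ≤ c ^ p.1 * (a * a ^ p.2) := by
        rw [← pow_succ']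
        gcongr
        exact pow_le_of_le_one (by positivity) (pow_le_one₀ hc0 hc1.le) (by omega)

lemma qPochInf_mul_div_qPochInf (ha0 : 0 ≤ a) (ha1 : a < 1) (hb0 : 0 ≤ b) (hb1 : b ≤ 1)
    (hc0 : 0 ≤ c) (hc1 : c < 1) :
    qPochInf (a * b) c / qPochInf a c = exp (∑' p, qPochRatioTerm a b c p) := by
  have hc : |c| < 1 := by rwa [abs_of_nonneg hc0]
  have hinner (k : ℕ) : HasSum (fun n => qPochRatioTerm a b c (k, n))
      (log (1 - a * b * c ^ k) - log (1 - a * c ^ k)) := by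
    have hu : a * c ^ k ≤ a := mul_le_of_le_one_right ha0 (pow_le_one₀ hc0 hc1.le)
    have hub : a * c ^ k * b ≤ a * c ^ k := mul_le_of_le_one_right (by positivity) hb1
    rw [mul_right_comm]
    refine hasSum_log_one_sub_mul_sub_log_one_sub ?_ ?_ <;>
      rw [abs_of_nonneg (by positivity)] <;> linarith
  rw [qPochInf_eq_exp_tsum_log (by rw [abs_of_nonneg (by positivity)]; nlinarith) hc,
    qPochInf_eq_exp_tsum_log (by rwa [abs_of_nonneg ha0]) hc, ← exp_sub,
    ← (summable_log_one_sub_mul_pow hc).tsum_sub (summable_log_one_sub_mul_pow hc),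
    (summable_qPochRatioTerm ha0 ha1 hb0 hb1 hc0 hc1).tsum_prod' fun k => (hinner k).summable]
  exact congrArg exp (tsum_congr fun k => (hinner k).tsum_eq.symm)

lemma qPochRatioTerm_rpow_eq (hq : 0 ≤ q) (x : ℝ) (p : ℕ × ℕ) :
    qPochRatioTerm (q ^ x) q c p =
      (1 - q ^ (p.2 + 1)) / (p.2 + 1) * (c ^ p.1) ^ (p.2 + 1) * (q ^ (p.2 + 1)) ^ x := by
  rw [qPochRatioTerm, mul_pow, rpow_pow_comm hq]
  ring

lemma strictAnti_qPochRatioTerm_rpow (hq0 : 0 < q) (hq1 : q < 1) (hc : 0 < c) (p : ℕ × ℕ) :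
    StrictAnti fun x : ℝ => qPochRatioTerm (q ^ x) q c p := by
  intro x y hxy
  simp only [qPochRatioTerm_rpow_eq hq0.le]
  have : q ^ (p.2 + 1) < 1 := pow_lt_one₀ hq0.le hq1 (by omega)
  gcongr
  exact strictAnti_rpow_of_base_lt_one (by positivity) this hxy

lemma convexOn_qPochRatioTerm_rpow (hq0 : 0 < q) (hq1 : q ≤ 1) (hc : 0 ≤ c) (p : ℕ × ℕ) :
    ConvexOn ℝ univ fun x : ℝ => qPochRatioTerm (q ^ x) q c p := by
  simp only [qPochRatioTerm_rpow_eq hq0.le]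
  have : q ^ (p.2 + 1) ≤ 1 := pow_le_one₀ hq0.le hq1
  exact (convexOn_rpow_left (by positivity)).smul
    (mul_nonneg (div_nonneg (by linarith) (by positivity)) (by positivity))

end QPochRatio

section QGamma

variable {q x : ℝ}

lemma sq_rpow_div_two (hq : 0 ≤ q) (x : ℝ) : (q ^ 2) ^ (x / 2) = q ^ x := by
  rw [← rpow_natCast_mul hq, Nat.cast_ofNat, mul_div_cancel₀ x two_ne_zero]

lemma qG_eq_sqrt_mul_qPochInf_div (hq0 : 0 < q) (hq1 : q < 1) (hx : 0 < x) :
    qG q x = √(1 - q) * (qPochInf (q ^ x * q) (q ^ 2) / qPochInf (q ^ x) (q ^ 2)) := by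
  have hq2 : |q ^ 2| < 1 := by rw [abs_of_nonneg (by positivity)]; nlinarith
  have hqx : 0 < q ^ x := rpow_pos_of_pos hq0 x
  have hqx1 : q ^ x < 1 := rpow_lt_one hq0.le hq1 hx
  have hA := qPochInf_pos_s11 hq2 hq2
  have hP := qPochInf_pos_s11 (by rw [abs_of_pos (mul_pos hqx hq0)]; nlinarith) hq2
  have hr : 0 < 1 - q ^ 2 := by nlinarith
  have hsplit : (1 - q ^ 2) ^ (1 - x / 2) =
      (1 - q ^ 2) ^ (1 - (x + 1) / 2) * (√(1 - q) * √(1 + q)) := by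
    rw [← sqrt_mul (by linarith), show (1 - q) * (1 + q) = 1 - q ^ 2 by ring, sqrt_eq_rpow,
      ← rpow_add hr]
    ring_nf
  have hsqrt : 0 < √(1 + q) := sqrt_pos.2 (by linarith)
  rw [qG, qGamma, qGamma, sq_rpow_div_two hq0.le, sq_rpow_div_two hq0.le,
    rpow_add_one hq0.ne', hsplit]
  field_simp

lemma qG_eq_sqrt_mul_exp_tsum (hq0 : 0 < q) (hq1 : q < 1) (hx : 0 < x) :
    qG q x = √(1 - q) * exp (∑' p, qPochRatioTerm (q ^ x) q (q ^ 2) p) := by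
  rw [qG_eq_sqrt_mul_qPochInf_div hq0 hq1 hx, qPochInf_mul_div_qPochInf (by positivity)
    (rpow_lt_one hq0.le hq1 hx) hq0.le hq1.le (by positivity) (by nlinarith)]

end QGamma

theorem stmt11 (q : ℝ) (hq0 : 0 < q) (hq1 : q < 1) :
    StrictAntiOn (qG q) (Ioi 0) ∧ ConvexOn ℝ (Ioi 0) (fun x => Real.log (qG q x)) := by
  set S : ℝ → ℝ := fun x => ∑' p, qPochRatioTerm (q ^ x) q (q ^ 2) p
  have hsum (x : ℝ) (hx : x ∈ Ioi 0) : Summable fun p => qPochRatioTerm (q ^ x) q (q ^ 2) p :=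
    summable_qPochRatioTerm (by positivity) (rpow_lt_one hq0.le hq1 hx) hq0.le hq1.le
      (by positivity) (by nlinarith)
  have hterm_anti := strictAnti_qPochRatioTerm_rpow hq0 hq1 (by positivity : 0 < q ^ 2)
  have hS_anti : StrictAntiOn S (Ioi 0) :=
    strictAntiOn_tsum (fun p => (hterm_anti p).antitone.antitoneOn _) (0, 0)
      ((hterm_anti (0, 0)).strictAntiOn _) hsum
  have hS_convex : ConvexOn ℝ (Ioi 0) S :=
    convexOn_tsum (convex_Ioi 0) (fun p => (convexOn_qPochRatioTerm_rpow hq0 hq1.le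
      (by positivity) p).subset (subset_univ _) (convex_Ioi 0)) hsum
  have hsqrt : 0 < √(1 - q) := sqrt_pos.2 (sub_pos.2 hq1)
  constructor
  · intro x hx y hy hxy
    rw [qG_eq_sqrt_mul_exp_tsum hq0 hq1 hx, qG_eq_sqrt_mul_exp_tsum hq0 hq1 hy]
    gcongr
    exact hS_anti hx hy hxy
  · refine (hS_convex.add_const (log √(1 - q))).congr fun x hx => ?_
    rw [qG_eq_sqrt_mul_exp_tsum hq0 hq1 hx, log_mul hsqrt.ne' (exp_ne_zero _), log_exp,
      Pi.add_apply, add_comm]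
end
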